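/- arXiv:2508.14265 — 3 statements merged into one kernel-verified Lean document; each statement's English description precedes it below -/
import Mathlib

section
/- Let W ⊂ F₂^(m+1) be a 2-dimensional linear subspace and suppose φ : F₂^(m+1) → F₂^(m-1) is such that {φ⁻¹(a) : a ∈ F₂^(m-1)} = {c + W : c ∈ F₂^(m+1)} (the trivial partition into cosets of W). Let f(x,y) = x·φ(y) + h(y) with x ∈ F₂^(m-1), y ∈ F₂^(m+1). Then for each of the 3 nonzero vectors w ∈ W, the m-dimensional subspace ⟨F₂^(m-1) × {0}, (0,w)⟩ is an M-subspace of f; hence f has at least 3 distinct m-dimensional M-subspaces. -/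
open Finset

/-- Dot product on `F₂^k`. -/
def dotp {k : ℕ} (x y : Fin k → ZMod 2) : ZMod 2 := ∑ i, x i * y i

/-- The character `z ↦ (-1)^z`. -/
def chr (z : ZMod 2) : ℤ := (-1 : ℤ) ^ z.val

/-- Walsh–Hadamard transform of a Boolean function on `F₂^p × F₂^q`. -/
def walshP {p q : ℕ} (f : (Fin p → ZMod 2) × (Fin q → ZMod 2) → ZMod 2)
    (a : Fin p → ZMod 2) (b : Fin q → ZMod 2) : ℤ :=
  ∑ x : Fin p → ZMod 2, ∑ y : Fin q → ZMod 2, chr (f (x, y) + dotp a x + dotp b y)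

/-- `S` is a 2-dimensional affine subspace (flat) of `F₂^k`. -/
def Is2Flat {k : ℕ} (S : Set (Fin k → ZMod 2)) : Prop :=
  ∃ (c : Fin k → ZMod 2) (W : Submodule (ZMod 2) (Fin k → ZMod 2)),
    Module.finrank (ZMod 2) ↥W = 2 ∧ S = (fun w => c + w) '' (W : Set (Fin k → ZMod 2))

/-- `V` is an M-subspace of `f`: all second-order derivatives along `V` vanish. -/
def IsMSub {p q : ℕ} (f : (Fin p → ZMod 2) × (Fin q → ZMod 2) → ZMod 2)
    (V : Submodule (ZMod 2) ((Fin p → ZMod 2) × (Fin q → ZMod 2))) : Prop :=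
  ∀ a ∈ V, ∀ b ∈ V, ∀ x, f x + f (x + a) + f (x + b) + f (x + a + b) = 0

/-!
Every fibre of `φ` is a coset of `W`, so `φ` is invariant under translation by `W`. Along
`V_w = F₂^(m-1) × ⟨w⟩` the second derivative of `f` splits into the second derivative of
`x ↦ x · φ(y)`, which is linear in `x` and so vanishes in characteristic 2, and that of `h`, which
vanishes because both directions move `y` inside `{0, w}`. The projection of `V_w` to the second
factor is `⟨w⟩`, so the three nonzero vectors of `W` give three different subspaces.
-/

open Module

section CharTwo

variable {N : Type*} [AddCommGroup N] [Module (ZMod 2) N]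

theorem mem_span_singleton_zmod_two {v w : N} : v ∈ ZMod 2 ∙ w ↔ v = 0 ∨ v = w := by
  rw [Submodule.mem_span_singleton]
  constructor
  · rintro ⟨t, rfl⟩
    obtain rfl | rfl : t = 0 ∨ t = 1 := by revert t; decide
    exacts [.inl (zero_smul _ _), .inr (one_smul _ _)]
  · rintro (rfl | rfl)
    exacts [⟨0, zero_smul _ _⟩, ⟨1, one_smul _ _⟩]

theorem span_singleton_injective_zmod_two : Function.Injective fun w : N ↦ ZMod 2 ∙ w := by
  intro w w' h
  obtain ⟨u, rfl⟩ := Submodule.span_singleton_eq_span_singleton.1 h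
  rw [Subsingleton.elim u 1, one_smul]

theorem prod_top_span_singleton_injective_zmod_two (M : Type*) [AddCommGroup M]
    [Module (ZMod 2) M] :
    Function.Injective fun w : N ↦ (⊤ : Submodule (ZMod 2) M).prod (ZMod 2 ∙ w) := by
  intro w w' h
  apply span_singleton_injective_zmod_two
  simpa only [Submodule.prod_map_snd] using congrArg (Submodule.map (LinearMap.snd _ M N)) h

theorem add_add_add_eq_zero_of_mem_span_singleton (g : N → ZMod 2) {w a b : N}
    (ha : a ∈ ZMod 2 ∙ w) (hb : b ∈ ZMod 2 ∙ w) (x : N) :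
    g x + g (x + a) + g (x + b) + g (x + a + b) = 0 := by
  rw [mem_span_singleton_zmod_two] at ha hb
  rcases ha with rfl | rfl <;> rcases hb with rfl | rfl <;>
    simp only [add_zero, add_assoc, ZModModule.add_self, add_left_comm (g x)]

theorem exists_three_ne_zero_of_finrank_eq_two {W : Submodule (ZMod 2) N}
    (hW : finrank (ZMod 2) W = 2) :
    ∃ w₁ ∈ W, ∃ w₂ ∈ W, ∃ w₃ ∈ W, w₁ ≠ 0 ∧ w₂ ≠ 0 ∧ w₃ ≠ 0 ∧
      w₁ ≠ w₂ ∧ w₁ ≠ w₃ ∧ w₂ ≠ w₃ := by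
  have := Module.finite_of_finrank_eq_succ hW
  let b := Module.finBasisOfFinrankEq (ZMod 2) W hW
  have hli : LinearIndependent (ZMod 2) (W.subtype ∘ b) :=
    b.linearIndependent.map' _ W.ker_subtype
  have h₀ : (b 0 : N) ≠ 0 := hli.ne_zero 0
  have h₁ : (b 1 : N) ≠ 0 := hli.ne_zero 1
  have h₀₁ : (b 0 : N) ≠ b 1 := hli.injective.ne (by decide)
  refine ⟨b 0, (b 0).2, b 1, (b 1).2, b 0 + b 1, add_mem (b 0).2 (b 1).2,
    h₀, h₁, fun h ↦ h₀₁ ?_, h₀₁, by simpa using h₁, by simpa using h₀⟩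
  rw [eq_neg_of_add_eq_zero_left h, ZModModule.neg_eq_self]

end CharTwo

theorem apply_add_eq_of_fibers_eq_cosets {R M α : Type*} [Semiring R] [AddCommGroup M]
    [Module R M] {W : Submodule R M} {φ : M → α}
    (hφ : ∀ a, ∃ c, {y | φ y = a} = (fun w ↦ c + w) '' (W : Set M)) (y : M) {w : M}
    (hw : w ∈ W) : φ (y + w) = φ y := by
  obtain ⟨c, hc⟩ := hφ (φ y)
  have hy : y ∈ {y' | φ y' = φ y} := rfl
  rw [hc] at hy
  obtain ⟨v, hv, rfl⟩ := hy
  suffices c + v + w ∈ {y' | φ y' = φ (c + v)} from this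
  rw [hc]
  exact ⟨v + w, W.add_mem hv hw, (add_assoc c v w).symm⟩

theorem Submodule.finrank_prod {K M N : Type*} [Field K] [AddCommGroup M] [Module K M]
    [AddCommGroup N] [Module K N] [FiniteDimensional K M] [FiniteDimensional K N]
    (p : Submodule K M) (q : Submodule K N) :
    finrank K (p.prod q) = finrank K p + finrank K q := by
  have hrange : p.prod q = LinearMap.range (p.subtype.prodMap q.subtype) := by
    rw [LinearMap.range_prodMap, p.range_subtype, q.range_subtype]
  have hinj : Function.Injective (p.subtype.prodMap q.subtype) :=
    Prod.map_injective.2 ⟨p.injective_subtype, q.injective_subtype⟩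
  rw [hrange, LinearMap.finrank_range_of_inj hinj, Module.finrank_prod]

theorem span_setOf_snd_eq_zero_union_singleton {R M N : Type*} [Semiring R]
    [AddCommMonoid M] [Module R M] [AddCommMonoid N] [Module R N] (w : N) :
    Submodule.span R ({p : M × N | p.2 = 0} ∪ {(0, w)}) = (⊤ : Submodule R M).prod (R ∙ w) := by
  apply le_antisymm
  · rw [Submodule.span_le]
    rintro p (hp | rfl)
    · simp [show p.2 = 0 from hp]
    · simp [Submodule.mem_span_singleton_self]
  · rintro ⟨x, y⟩ ⟨-, hy⟩
    obtain ⟨t, rfl⟩ := Submodule.mem_span_singleton.1 hy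
    have : (x, t • w) = (x, 0) + t • (0, w) := by simp
    rw [this]
    exact add_mem (Submodule.subset_span (Or.inl rfl))
      (Submodule.smul_mem _ _ (Submodule.subset_span (Or.inr rfl)))

theorem dotp_add_left {k : ℕ} (x x' y : Fin k → ZMod 2) :
    dotp (x + x') y = dotp x y + dotp x' y := by
  simp [dotp, add_mul, Finset.sum_add_distrib]

theorem dotp_add_add_add_eq_zero {k : ℕ} (x a b y : Fin k → ZMod 2) :
    dotp x y + dotp (x + a) y + dotp (x + b) y + dotp (x + a + b) y = 0 := by
  simp only [dotp_add_left]
  ring_nf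
  reduce_mod_char

theorem isMSub_prod_top_span_singleton {p q : ℕ} {φ : (Fin q → ZMod 2) → (Fin p → ZMod 2)}
    {h : (Fin q → ZMod 2) → ZMod 2} {f : (Fin p → ZMod 2) × (Fin q → ZMod 2) → ZMod 2}
    (hf : ∀ x y, f (x, y) = dotp x (φ y) + h y) {w : Fin q → ZMod 2}
    (hφ : ∀ y, φ (y + w) = φ y) :
    IsMSub f ((⊤ : Submodule (ZMod 2) (Fin p → ZMod 2)).prod (ZMod 2 ∙ w)) := by
  rintro ⟨a, a'⟩ ⟨-, ha'⟩ ⟨b, b'⟩ ⟨-, hb'⟩ ⟨x, y⟩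
  have hφ' : ∀ y, ∀ v ∈ ZMod 2 ∙ w, φ (y + v) = φ y := by
    intro y v hv
    rcases mem_span_singleton_zmod_two.1 hv with rfl | rfl
    exacts [congrArg φ (add_zero y), hφ y]
  simp only [Prod.mk_add_mk, hf, hφ' _ _ ha', hφ' _ _ hb']
  linear_combination dotp_add_add_add_eq_zero x a b (φ y) +
    add_add_add_eq_zero_of_mem_span_singleton h ha' hb' y

/-- a trivial partition into cosets of a fixed 2-dimensional `W` gives,
for each of the 3 nonzero `w ∈ W`, the `m`-dimensional M-subspace
`⟨F₂^{m-1} × {0}, (0,w)⟩`; hence at least 3 distinct `m`-dimensional M-subspaces. -/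
theorem trivial_partition_three_M_subspaces {m : ℕ}
    (φ : (Fin (m + 1) → ZMod 2) → (Fin (m - 1) → ZMod 2))
    (h : (Fin (m + 1) → ZMod 2) → ZMod 2)
    (f : (Fin (m - 1) → ZMod 2) × (Fin (m + 1) → ZMod 2) → ZMod 2)
    (hf : ∀ x y, f (x, y) = dotp x (φ y) + h y)
    (W : Submodule (ZMod 2) (Fin (m + 1) → ZMod 2))
    (hW : Module.finrank (ZMod 2) ↥W = 2)
    (hcoset : ∀ a, ∃ c, {y | φ y = a} =
      (fun w => c + w) '' (W : Set (Fin (m + 1) → ZMod 2))) :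
    (∀ w ∈ W, w ≠ 0 →
      IsMSub f (Submodule.span (ZMod 2)
        ({p : (Fin (m - 1) → ZMod 2) × (Fin (m + 1) → ZMod 2) | p.2 = 0} ∪ {(0, w)})) ∧
      Module.finrank (ZMod 2)
        ↥(Submodule.span (ZMod 2)
          ({p : (Fin (m - 1) → ZMod 2) × (Fin (m + 1) → ZMod 2) | p.2 = 0} ∪ {(0, w)})) = m) ∧
    ∃ V₁ V₂ V₃ : Submodule (ZMod 2) ((Fin (m - 1) → ZMod 2) × (Fin (m + 1) → ZMod 2)),
      V₁ ≠ V₂ ∧ V₁ ≠ V₃ ∧ V₂ ≠ V₃ ∧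
      (IsMSub f V₁ ∧ Module.finrank (ZMod 2) ↥V₁ = m) ∧
      (IsMSub f V₂ ∧ Module.finrank (ZMod 2) ↥V₂ = m) ∧
      (IsMSub f V₃ ∧ Module.finrank (ZMod 2) ↥V₃ = m) := by
  have hm : 1 ≤ m := by
    have := W.finrank_le
    rw [hW, finrank_fin_fun] at this
    omega
  have key : ∀ w ∈ W, w ≠ 0 →
      IsMSub f (Submodule.span (ZMod 2)
        ({p : (Fin (m - 1) → ZMod 2) × (Fin (m + 1) → ZMod 2) | p.2 = 0} ∪ {(0, w)})) ∧
      Module.finrank (ZMod 2)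
        ↥(Submodule.span (ZMod 2)
          ({p : (Fin (m - 1) → ZMod 2) × (Fin (m + 1) → ZMod 2) | p.2 = 0} ∪ {(0, w)})) = m := by
    intro w hwW hw
    rw [span_setOf_snd_eq_zero_union_singleton]
    refine ⟨isMSub_prod_top_span_singleton hf fun y ↦
      apply_add_eq_of_fibers_eq_cosets hcoset y hwW, ?_⟩
    rw [Submodule.finrank_prod, finrank_top, finrank_span_singleton hw, finrank_fin_fun]
    omega
  obtain ⟨w₁, hw₁, w₂, hw₂, w₃, hw₃, h₁, h₂, h₃, h₁₂, h₁₃, h₂₃⟩ :=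
    exists_three_ne_zero_of_finrank_eq_two hW
  have hV : Function.Injective fun w : Fin (m + 1) → ZMod 2 ↦ Submodule.span (ZMod 2)
      ({p : (Fin (m - 1) → ZMod 2) × (Fin (m + 1) → ZMod 2) | p.2 = 0} ∪ {(0, w)}) := by
    simpa only [span_setOf_snd_eq_zero_union_singleton] using
      prod_top_span_singleton_injective_zmod_two _
  exact ⟨key, _, _, _, hV.ne h₁₂, hV.ne h₁₃, hV.ne h₂₃,
    key w₁ hw₁ h₁, key w₂ hw₂ h₂, key w₃ hw₃ h₃⟩
end

section
/- Let f₁, f₂, f₃, f₄ : F₂^n → F₂ be bent functions on F₂^n (n even) and let f : F₂^n × F₂² → F₂ be their concatenation, f(x, 0,0) = f₁(x), f(x,0,1) = f₂(x), f(x,1,0) = f₃(x), f(x,1,1) = f₄(x). Then f is bent if and only if f₁* + f₂* + f₃* + f₄* = 1, where fᵢ* denotes the dual of fᵢ. -/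
/-!
Splitting the sum over `F₂^n × F₂²` along the last two coordinates writes `W_f(a, b)` as
`W_{f₁}(a) + (-1)^{b₁} W_{f₂}(a) + (-1)^{b₀} W_{f₃}(a) + (-1)^{b₀+b₁} W_{f₄}(a)`, that is
`2^{n/2}` times a sum of four signs whose exponents add up to `f₁*(a) + ⋯ + f₄*(a)` (the `b`-terms
occur twice and cancel). Four signs sum to `±2` exactly when an odd number of them are `-1`.
-/

open Finset

/-- Walsh–Hadamard transform of a Boolean function on `F₂^p`. -/
def walsh {p : ℕ} (f : (Fin p → ZMod 2) → ZMod 2) (a : Fin p → ZMod 2) : ℤ :=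
  ∑ x : Fin p → ZMod 2, chr (f x + dotp a x)

lemma chr_add : ∀ u v : ZMod 2, chr (u + v) = chr u * chr v := by decide

lemma sum_fin_two_zmod_two {M : Type*} [AddCommMonoid M] (g : (Fin 2 → ZMod 2) → M) :
    ∑ y, g y = g ![0, 0] + g ![0, 1] + g ![1, 0] + g ![1, 1] := by
  have huniv : (univ : Finset (Fin 2 → ZMod 2)) = {![0, 0], ![0, 1], ![1, 0], ![1, 1]} := by
    decide
  rw [huniv, sum_insert (by decide), sum_insert (by decide), sum_insert (by decide),
    sum_singleton]
  abel

lemma walshP_eq_sum_walsh {p q : ℕ} (f : (Fin p → ZMod 2) × (Fin q → ZMod 2) → ZMod 2)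
    (a : Fin p → ZMod 2) (b : Fin q → ZMod 2) :
    walshP f a b = ∑ y, walsh (fun x => f (x, y)) a * chr (dotp b y) := by
  rw [walshP, sum_comm]
  simp only [walsh, sum_mul, chr_add]

lemma walshP_concat {p : ℕ} (f₁ f₂ f₃ f₄ : (Fin p → ZMod 2) → ZMod 2)
    (f : (Fin p → ZMod 2) × (Fin 2 → ZMod 2) → ZMod 2)
    (hc₁ : ∀ x, f (x, ![0, 0]) = f₁ x) (hc₂ : ∀ x, f (x, ![0, 1]) = f₂ x)
    (hc₃ : ∀ x, f (x, ![1, 0]) = f₃ x) (hc₄ : ∀ x, f (x, ![1, 1]) = f₄ x)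
    (a : Fin p → ZMod 2) (b : Fin 2 → ZMod 2) :
    walshP f a b = walsh f₁ a + walsh f₂ a * chr (b 1) + walsh f₃ a * chr (b 0)
      + walsh f₄ a * chr (b 0 + b 1) := by
  rw [walshP_eq_sum_walsh, sum_fin_two_zmod_two]
  simp only [funext hc₁, funext hc₂, funext hc₃, funext hc₄, dotp, Fin.sum_univ_two]
  simp [chr]

lemma chr_sum_four_eq_two_or_neg_two_iff : ∀ z₁ z₂ z₃ z₄ : ZMod 2,
    (chr z₁ + chr z₂ + chr z₃ + chr z₄ = 2 ∨ chr z₁ + chr z₂ + chr z₃ + chr z₄ = -2)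
      ↔ z₁ + z₂ + z₃ + z₄ = 1 := by
  decide

lemma two_pow_mul_chr_sum_four_eq_pm_iff (k : ℕ) (z₁ z₂ z₃ z₄ : ZMod 2) :
    (2 ^ k * (chr z₁ + chr z₂ + chr z₃ + chr z₄) = 2 ^ (k + 1) ∨
        2 ^ k * (chr z₁ + chr z₂ + chr z₃ + chr z₄) = -(2 ^ (k + 1)))
      ↔ z₁ + z₂ + z₃ + z₄ = 1 := by
  rw [← chr_sum_four_eq_two_or_neg_two_iff, pow_succ, ← mul_neg,
    mul_right_inj' (by positivity), mul_right_inj' (by positivity)]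

/-- the concatenation `f₁‖f₂‖f₃‖f₄` of four bent functions (with duals
`d₁,…,d₄`) is bent iff `d₁ + d₂ + d₃ + d₄ = 1`. -/
theorem concat_bent_iff_duals_sum_one {k : ℕ}
    (f₁ f₂ f₃ f₄ : (Fin (2 * k) → ZMod 2) → ZMod 2)
    (d₁ d₂ d₃ d₄ : (Fin (2 * k) → ZMod 2) → ZMod 2)
    (hd₁ : ∀ w, walsh f₁ w = 2 ^ k * chr (d₁ w))
    (hd₂ : ∀ w, walsh f₂ w = 2 ^ k * chr (d₂ w))
    (hd₃ : ∀ w, walsh f₃ w = 2 ^ k * chr (d₃ w))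
    (hd₄ : ∀ w, walsh f₄ w = 2 ^ k * chr (d₄ w))
    (f : (Fin (2 * k) → ZMod 2) × (Fin 2 → ZMod 2) → ZMod 2)
    (hc₁ : ∀ x, f (x, ![0, 0]) = f₁ x)
    (hc₂ : ∀ x, f (x, ![0, 1]) = f₂ x)
    (hc₃ : ∀ x, f (x, ![1, 0]) = f₃ x)
    (hc₄ : ∀ x, f (x, ![1, 1]) = f₄ x) :
    (∀ a b, walshP f a b = 2 ^ (k + 1) ∨ walshP f a b = -(2 ^ (k + 1))) ↔
      ∀ w, d₁ w + d₂ w + d₃ w + d₄ w = 1 := by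
  have hW : ∀ a b, walshP f a b = 2 ^ k *
      (chr (d₁ a) + chr (d₂ a + b 1) + chr (d₃ a + b 0) + chr (d₄ a + (b 0 + b 1))) := by
    intro a b
    rw [walshP_concat f₁ f₂ f₃ f₄ f hc₁ hc₂ hc₃ hc₄, hd₁, hd₂, hd₃, hd₄]
    simp only [chr_add]
    ring
  simp only [hW, two_pow_mul_chr_sum_four_eq_pm_iff]
  constructor
  · intro h w
    simpa using h w 0
  · intro h a b
    linear_combination h a + (b 0 + b 1) * CharTwo.two_eq_zero (R := ZMod 2)
end

section
/- Let φ : F₂^(m+k) → F₂^(m-k) (with 0 < k < m) satisfy property (P₁*): D_v D_w φ ≠ 0 for all pairs of linearly independent v, w ∈ F₂^(m+k). Let f(x,y) = x·φ(y) + h(y) on F₂^(m-k) × F₂^(m+k). Then every M-subspace V of f satisfies dim V ≤ m - k. -/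
open Finset

/-- Property `(P₁*)`: every second-order derivative along a pair of linearly
independent directions is not identically zero. -/
def P1star {p q : ℕ} (φ : (Fin p → ZMod 2) → (Fin q → ZMod 2)) : Prop :=
  ∀ v w : Fin p → ZMod 2, LinearIndependent (ZMod 2) ![v, w] →
    ∃ y, φ y + φ (y + v) + φ (y + w) + φ (y + v + w) ≠ 0

/-!
Let `V₂` be the projection of `V` to the `y`-coordinates and `V₁ = {x | (x, 0) ∈ V}`, so that
`dim V ≤ dim V₂ + dim V₁`. If `V₂ ≠ 0`, pick `a ∈ V` with `a.2 ≠ 0`. For `b ∈ V` the derivative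
`D_{a.2} D_{b.2} φ` vanishes, so `b.2 ∈ {0, a.2}` by `(P₁*)` and `dim V₂ = 1`. Every `x ∈ V₁`
satisfies `x · D_{a.2} φ(y) = 0`, and `D_{a.2} φ ≢ 0` (otherwise `D_{a.2} D_w φ ≡ 0` for any
`w ∉ {0, a.2}`, which exists as `m + k ≥ 2`), so `V₁` is a proper subspace of `F₂^(m-k)`.
-/

open Module

theorem Submodule.finrank_le_finrank_map_snd_add_finrank_comap_inl {K M N : Type*} [Field K]
    [AddCommGroup M] [Module K M] [AddCommGroup N] [Module K N]
    [FiniteDimensional K M] [FiniteDimensional K N] (V : Submodule K (M × N)) :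
    finrank K V ≤
      finrank K (V.map (LinearMap.snd K M N)) + finrank K (V.comap (LinearMap.inl K M N)) := by
  set π := (LinearMap.snd K M N).domRestrict V
  have hker : finrank K (LinearMap.ker π) ≤ finrank K (V.comap (LinearMap.inl K M N)) := by
    refine LinearMap.finrank_le_finrank_of_injective (f := LinearMap.codRestrict _
      (LinearMap.fst K M N ∘ₗ V.subtype ∘ₗ (LinearMap.ker π).subtype) ?_) ?_
    · rintro ⟨⟨⟨x, y⟩, hxy⟩, hy⟩
      obtain rfl : y = 0 := hy
      exact hxy
    · rintro ⟨⟨⟨x, y⟩, _⟩, hy⟩ ⟨⟨⟨x', y'⟩, _⟩, hy'⟩ hxx'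
      obtain rfl : y = 0 := hy
      obtain rfl : y' = 0 := hy'
      obtain rfl : x = x' := congrArg Subtype.val hxx'
      rfl
  rw [← π.finrank_range_add_finrank_ker, LinearMap.range_domRestrict]
  omega

theorem linearIndependent_pair_zmod_two {M : Type*} [AddCommGroup M] [Module (ZMod 2) M]
    {v w : M} (hv : v ≠ 0) (hw : w ≠ 0) (hvw : v ≠ w) : LinearIndependent (ZMod 2) ![v, w] := by
  have hww : w + w = 0 := by rw [← two_nsmul]; exact ZModModule.char_nsmul_eq_zero 2 w
  have zero_or_one : ∀ c : ZMod 2, c = 0 ∨ c = 1 := by decide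
  rw [LinearIndependent.pair_iff]
  intro s t hst
  rcases zero_or_one s with rfl | rfl <;> rcases zero_or_one t with rfl | rfl <;>
    simp only [zero_smul, one_smul, zero_add, add_zero] at hst
  · exact ⟨rfl, rfl⟩
  · exact absurd hst hw
  · exact absurd hst hv
  · exact absurd (by rw [← add_zero v, ← hww, ← add_assoc, hst, zero_add]) hvw

theorem dotp_eq_dotProduct {k : ℕ} (x y : Fin k → ZMod 2) : dotp x y = x ⬝ᵥ y := rfl

section

variable {p q : ℕ} {φ : (Fin q → ZMod 2) → Fin p → ZMod 2}

theorem P1star.eq_zero_or_eq_of_secondDeriv_eq_zero (hφ : P1star φ) {v w : Fin q → ZMod 2}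
    (hv : v ≠ 0) (hvw : ∀ y, φ y + φ (y + v) + φ (y + w) + φ (y + v + w) = 0) :
    w = 0 ∨ w = v := by
  by_contra! hw
  obtain ⟨y, hy⟩ := hφ v w (linearIndependent_pair_zmod_two hv hw.1 (Ne.symm hw.2))
  exact hy (hvw y)

theorem P1star.exists_deriv_ne_zero (hφ : P1star φ) (hq : 2 ≤ q) {v : Fin q → ZMod 2}
    (hv : v ≠ 0) : ∃ y, φ y + φ (y + v) ≠ 0 := by
  obtain ⟨w, -, hw⟩ : ∃ w ∈ Finset.univ, w ∉ ({0, v} : Finset (Fin q → ZMod 2)) := by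
    refine Finset.exists_mem_notMem_of_card_lt_card ?_
    calc #{0, v} ≤ 2 := Finset.card_le_two
      _ < 2 ^ 2 := by norm_num
      _ ≤ 2 ^ q := Nat.pow_le_pow_right two_pos hq
      _ = #(Finset.univ : Finset (Fin q → ZMod 2)) := by simp
  by_contra! hconst
  refine hw ?_
  have hvw : ∀ y, φ y + φ (y + v) + φ (y + w) + φ (y + v + w) = 0 := fun y => by
    rw [add_right_comm y v w, add_assoc, hconst y, hconst (y + w), add_zero]
  rcases hφ.eq_zero_or_eq_of_secondDeriv_eq_zero hv hvw with rfl | rfl <;> simp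

variable {h : (Fin q → ZMod 2) → ZMod 2} {f : (Fin p → ZMod 2) × (Fin q → ZMod 2) → ZMod 2}

theorem secondDeriv_eq_of_eq_dotp_add (hf : ∀ x y, f (x, y) = dotp x (φ y) + h y)
    (x a₁ b₁ : Fin p → ZMod 2) (y a₂ b₂ : Fin q → ZMod 2) :
    f (x, y) + f ((x, y) + (a₁, a₂)) + f ((x, y) + (b₁, b₂)) + f ((x, y) + (a₁, a₂) + (b₁, b₂)) =
      dotp x (φ y + φ (y + a₂) + φ (y + b₂) + φ (y + a₂ + b₂)) +
        dotp a₁ (φ (y + a₂) + φ (y + a₂ + b₂)) + dotp b₁ (φ (y + b₂) + φ (y + a₂ + b₂)) +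
        (h y + h (y + a₂) + h (y + b₂) + h (y + a₂ + b₂)) := by
  simp only [Prod.mk_add_mk, hf, dotp_eq_dotProduct, add_dotProduct, dotProduct_add]
  ring

variable {V : Submodule (ZMod 2) ((Fin p → ZMod 2) × (Fin q → ZMod 2))}

theorem IsMSub.secondDeriv_eq_zero (hf : ∀ x y, f (x, y) = dotp x (φ y) + h y) (hV : IsMSub f V)
    {a b : (Fin p → ZMod 2) × (Fin q → ZMod 2)} (ha : a ∈ V) (hb : b ∈ V) (y : Fin q → ZMod 2) :
    φ y + φ (y + a.2) + φ (y + b.2) + φ (y + a.2 + b.2) = 0 := by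
  funext i
  have at_zero := hV a ha b hb (0, y)
  have at_single := hV a ha b hb (Pi.single i 1, y)
  rw [secondDeriv_eq_of_eq_dotp_add hf] at at_zero at_single
  simp only [dotp_eq_dotProduct, zero_dotProduct, single_dotProduct, one_mul] at at_zero at_single
  rw [Pi.zero_apply]
  linear_combination at_single - at_zero

theorem IsMSub.dotp_deriv_eq_zero (hf : ∀ x y, f (x, y) = dotp x (φ y) + h y) (hV : IsMSub f V)
    {a : (Fin p → ZMod 2) × (Fin q → ZMod 2)} {x : Fin p → ZMod 2} (ha : a ∈ V) (hx : (x, 0) ∈ V)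
    (y : Fin q → ZMod 2) : dotp x (φ y + φ (y + a.2)) = 0 := by
  have := hV a ha (x, 0) hx (0, y)
  rw [secondDeriv_eq_of_eq_dotp_add hf] at this
  simp only [add_zero, dotp_eq_dotProduct, zero_dotProduct, zero_add, dotProduct_add,
    CharTwo.add_self_eq_zero] at this
  rw [dotp_eq_dotProduct, dotProduct_add]
  linear_combination this - CharTwo.add_self_eq_zero (h y + h (y + a.2))

theorem IsMSub.map_snd_le_span_singleton (hf : ∀ x y, f (x, y) = dotp x (φ y) + h y)
    (hV : IsMSub f V) (hφ : P1star φ) {a : (Fin p → ZMod 2) × (Fin q → ZMod 2)} (ha : a ∈ V)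
    (ha₂ : a.2 ≠ 0) : V.map (LinearMap.snd (ZMod 2) _ _) ≤ Submodule.span (ZMod 2) {a.2} := by
  rintro _ ⟨b, hb, rfl⟩
  rcases hφ.eq_zero_or_eq_of_secondDeriv_eq_zero ha₂ (hV.secondDeriv_eq_zero hf ha hb)
    with hb₂ | hb₂
  · simp [hb₂]
  · simp [hb₂, Submodule.mem_span_singleton_self]

theorem IsMSub.comap_inl_ne_top (hf : ∀ x y, f (x, y) = dotp x (φ y) + h y) (hV : IsMSub f V)
    (hφ : P1star φ) (hq : 2 ≤ q) {a : (Fin p → ZMod 2) × (Fin q → ZMod 2)} (ha : a ∈ V)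
    (ha₂ : a.2 ≠ 0) : V.comap (LinearMap.inl (ZMod 2) _ _) ≠ ⊤ := by
  obtain ⟨y, hy⟩ := hφ.exists_deriv_ne_zero hq ha₂
  obtain ⟨i, hi⟩ := Function.ne_iff.1 hy
  intro htop
  have hsingle : (Pi.single i 1, 0) ∈ V := by
    simpa using htop.ge (Submodule.mem_top (x := Pi.single i 1))
  have := hV.dotp_deriv_eq_zero hf ha hsingle y
  rw [dotp_eq_dotProduct, single_dotProduct, one_mul] at this
  exact hi this

end

/-- if `φ : F₂^{m+k} → F₂^{m-k}` satisfies `(P₁*)` then every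
M-subspace of `f(x,y) = x·φ(y) + h(y)` has dimension at most `m - k`. -/
theorem MSub_dim_le_of_P1star {m k : ℕ} (hk : 0 < k) (hkm : k < m)
    (φ : (Fin (m + k) → ZMod 2) → (Fin (m - k) → ZMod 2)) (hφ : P1star φ)
    (h : (Fin (m + k) → ZMod 2) → ZMod 2)
    (f : (Fin (m - k) → ZMod 2) × (Fin (m + k) → ZMod 2) → ZMod 2)
    (hf : ∀ x y, f (x, y) = dotp x (φ y) + h y)
    (V : Submodule (ZMod 2) ((Fin (m - k) → ZMod 2) × (Fin (m + k) → ZMod 2)))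
    (hV : IsMSub f V) :
    Module.finrank (ZMod 2) ↥V ≤ m - k := by
  have hdim := V.finrank_le_finrank_map_snd_add_finrank_comap_inl
  by_cases hsnd : ∃ a ∈ V, a.2 ≠ 0
  · obtain ⟨a, ha, ha₂⟩ := hsnd
    have hmap : finrank (ZMod 2) (V.map (LinearMap.snd (ZMod 2) _ _)) ≤ 1 :=
      (Submodule.finrank_mono (hV.map_snd_le_span_singleton hf hφ ha ha₂)).trans
        (finrank_span_singleton ha₂).le
    have hcomap : finrank (ZMod 2) (V.comap (LinearMap.inl (ZMod 2) _ _)) < m - k :=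
      (Submodule.finrank_lt (hV.comap_inl_ne_top hf hφ (by omega) ha ha₂)).trans_eq
        (Module.finrank_fin_fun _)
    omega
  · push Not at hsnd
    have hmap : V.map (LinearMap.snd (ZMod 2) _ _) = ⊥ := by
      rw [eq_bot_iff]
      rintro _ ⟨b, hb, rfl⟩
      exact hsnd b hb
    have hcomap := Submodule.finrank_le (V.comap (LinearMap.inl (ZMod 2) _ _))
    rw [Module.finrank_fin_fun] at hcomap
    rw [hmap, finrank_bot] at hdim
    omega
end
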